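/- Partition of the belief space into ordered regions: assume (A1) and l1, l2, l3 > 0, and fix an incentive p ∈ ℝ. Define P_3 = {q ∈ [0,1] : p < Δ_2(q)}, P_2 = {q ∈ [0,1] : Δ_2(q) ≤ p < Δ_1(q)}, and P_1 = {q ∈ [0,1] : Δ_1(q) ≤ p}. Then P_3, P_2, P_1 are pairwise disjoint with union [0,1]; each of the three sets is order-convex (an interval); and they are ordered: every element of P_3 is strictly less than every element of P_2, and every element of P_2 is strictly less than every element of P_1. -/
import Mathlib


/-- Probability of observation `y` under belief `q`, where `b1 = B_{1y}` and `b2 = B_{2y}`. -/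
noncomputable def slSig (b1 b2 q : ℝ) : ℝ := b1 * (1 - q) + b2 * q

/-- Private (Bayesian posterior) belief after observation `y`. -/
noncomputable def slEta (b1 b2 q : ℝ) : ℝ := b2 * q / slSig b1 b2 q

/-- Incentive function `Δ_y(q) = l1 + l3 - (l1 + l2) η_y(q)`. -/
noncomputable def slDelta (l1 l2 l3 b1 b2 q : ℝ) : ℝ := l1 + l3 - (l1 + l2) * slEta b1 b2 q


lemma slSig_pos {b1 b2 q : ℝ} (h1 : 0 < b1) (h2 : 0 < b2) (hq0 : 0 ≤ q) (hq1 : q ≤ 1) :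
    0 < slSig b1 b2 q := by
  unfold slSig
  rcases le_total b1 b2 with h | h
  · nlinarith [mul_nonneg (sub_nonneg.2 h) hq0]
  · nlinarith [mul_nonneg (sub_nonneg.2 h) (sub_nonneg.2 hq1)]

lemma slDelta_anti {l1 l2 l3 b1 b2 q q' : ℝ} (hl : 0 < l1 + l2)
    (h1 : 0 < b1) (h2 : 0 < b2) (hq0 : 0 ≤ q) (hq1 : q' ≤ 1) (hqq : q ≤ q') :
    slDelta l1 l2 l3 b1 b2 q' ≤ slDelta l1 l2 l3 b1 b2 q := by
  have hσ : 0 < slSig b1 b2 q := slSig_pos h1 h2 hq0 (hqq.trans hq1)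
  have hσ' : 0 < slSig b1 b2 q' := slSig_pos h1 h2 (hq0.trans hqq) hq1
  have heta : slEta b1 b2 q ≤ slEta b1 b2 q' := by
    unfold slEta
    rw [div_le_div_iff₀ hσ hσ']
    unfold slSig
    nlinarith [mul_nonneg (mul_nonneg h1.le h2.le) (sub_nonneg.2 hqq)]
  unfold slDelta; nlinarith

lemma slDelta2_le_1 {l1 l2 l3 B11 B12 B21 B22 q : ℝ} (hl : 0 < l1 + l2)
    (hB11 : 0 < B11) (hB12 : 0 < B12) (hB21 : 0 < B21) (hB22 : 0 < B22)
    (hA1 : B11 * B22 - B12 * B21 ≥ 0) (hq0 : 0 ≤ q) (hq1 : q ≤ 1) :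
    slDelta l1 l2 l3 B12 B22 q ≤ slDelta l1 l2 l3 B11 B21 q := by
  have hσ1 : 0 < slSig B11 B21 q := slSig_pos hB11 hB21 hq0 hq1
  have hσ2 : 0 < slSig B12 B22 q := slSig_pos hB12 hB22 hq0 hq1
  have heta : slEta B11 B21 q ≤ slEta B12 B22 q := by
    unfold slEta
    rw [div_le_div_iff₀ hσ1 hσ2]
    unfold slSig; nlinarith [mul_nonneg (mul_nonneg hq0 (by linarith : (0:ℝ) ≤ 1 - q)) hA1]
  unfold slDelta; nlinarith

/-- Herding region `P_3 = {q ∈ [0,1] : p < Δ_2(q)}` (the sensor takes action 1). -/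
def slP3 (l1 l2 l3 B12 B22 p : ℝ) : Set ℝ :=
  {q | q ∈ Set.Icc (0:ℝ) 1 ∧ p < slDelta l1 l2 l3 B12 B22 q}

/-- Social learning region `P_2 = {q ∈ [0,1] : Δ_2(q) ≤ p < Δ_1(q)}`. -/
def slP2 (l1 l2 l3 B11 B12 B21 B22 p : ℝ) : Set ℝ :=
  {q | q ∈ Set.Icc (0:ℝ) 1 ∧ slDelta l1 l2 l3 B12 B22 q ≤ p ∧
    p < slDelta l1 l2 l3 B11 B21 q}

/-- Herding region `P_1 = {q ∈ [0,1] : Δ_1(q) ≤ p}` (the sensor takes action 2). -/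
def slP1 (l1 l2 l3 B11 B21 p : ℝ) : Set ℝ :=
  {q | q ∈ Set.Icc (0:ℝ) 1 ∧ slDelta l1 l2 l3 B11 B21 q ≤ p}

/-- under (A1) and `l1, l2, l3 > 0`, for any incentive `p` the regions
`P_3, P_2, P_1` are pairwise disjoint, their union is `[0,1]`, each is order-convex
(an interval), and they are ordered: every element of `P_3` is strictly below every
element of `P_2`, and every element of `P_2` is strictly below every element of `P_1`. -/
theorem stmt17
    (B11 B12 B21 B22 l1 l2 l3 p : ℝ)
    (hB11 : 0 < B11) (hB12 : 0 < B12) (hB21 : 0 < B21) (hB22 : 0 < B22)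
    (hrow1 : B11 + B12 = 1) (hrow2 : B21 + B22 = 1)
    (hA1 : B11 * B22 - B12 * B21 ≥ 0)
    (hl1 : 0 < l1) (hl2 : 0 < l2) (hl3 : 0 < l3) :
    (Disjoint (slP3 l1 l2 l3 B12 B22 p) (slP2 l1 l2 l3 B11 B12 B21 B22 p) ∧
      Disjoint (slP2 l1 l2 l3 B11 B12 B21 B22 p) (slP1 l1 l2 l3 B11 B21 p) ∧
      Disjoint (slP3 l1 l2 l3 B12 B22 p) (slP1 l1 l2 l3 B11 B21 p)) ∧
    (slP3 l1 l2 l3 B12 B22 p ∪ slP2 l1 l2 l3 B11 B12 B21 B22 p ∪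
        slP1 l1 l2 l3 B11 B21 p = Set.Icc (0:ℝ) 1) ∧
    ((slP3 l1 l2 l3 B12 B22 p).OrdConnected ∧
      (slP2 l1 l2 l3 B11 B12 B21 B22 p).OrdConnected ∧
      (slP1 l1 l2 l3 B11 B21 p).OrdConnected) ∧
    (∀ a ∈ slP3 l1 l2 l3 B12 B22 p, ∀ b ∈ slP2 l1 l2 l3 B11 B12 B21 B22 p, a < b) ∧
    (∀ b ∈ slP2 l1 l2 l3 B11 B12 B21 B22 p, ∀ c ∈ slP1 l1 l2 l3 B11 B21 p, b < c) := by
  have hl : 0 < l1 + l2 := by linarith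
  -- antitonicity of the two Delta functions on [0,1]
  have anti2 : ∀ q q' : ℝ, 0 ≤ q → q' ≤ 1 → q ≤ q' →
      slDelta l1 l2 l3 B12 B22 q' ≤ slDelta l1 l2 l3 B12 B22 q :=
    fun q q' h0 h1 h => slDelta_anti hl hB12 hB22 h0 h1 h
  have anti1 : ∀ q q' : ℝ, 0 ≤ q → q' ≤ 1 → q ≤ q' →
      slDelta l1 l2 l3 B11 B21 q' ≤ slDelta l1 l2 l3 B11 B21 q :=
    fun q q' h0 h1 h => slDelta_anti hl hB11 hB21 h0 h1 h
  have h21 : ∀ q : ℝ, 0 ≤ q → q ≤ 1 →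
      slDelta l1 l2 l3 B12 B22 q ≤ slDelta l1 l2 l3 B11 B21 q :=
    fun q h0 h1 => slDelta2_le_1 hl hB11 hB12 hB21 hB22 hA1 h0 h1
  have ord32 : ∀ a ∈ slP3 l1 l2 l3 B12 B22 p, ∀ b ∈ slP2 l1 l2 l3 B11 B12 B21 B22 p, a < b := by
    rintro a ⟨⟨ha0, ha1⟩, hpa⟩ b ⟨⟨hb0, hb1⟩, hb2, -⟩
    by_contra h
    push_neg at h
    exact absurd (anti2 b a hb0 ha1 h) (by linarith)
  have ord21 : ∀ b ∈ slP2 l1 l2 l3 B11 B12 B21 B22 p, ∀ c ∈ slP1 l1 l2 l3 B11 B21 p, b < c := by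
    rintro b ⟨⟨hb0, hb1⟩, -, hb2⟩ c ⟨⟨hc0, hc1⟩, hpc⟩
    by_contra h
    push_neg at h
    exact absurd (anti1 c b hc0 hb1 h) (by linarith)
  refine ⟨⟨?_, ?_, ?_⟩, ?_, ⟨?_, ?_, ?_⟩, ord32, ord21⟩
  · rw [Set.disjoint_left]
    rintro q ⟨-, h1⟩ ⟨-, h2, -⟩; linarith
  · rw [Set.disjoint_left]
    rintro q ⟨-, -, h1⟩ ⟨-, h2⟩; linarith
  · rw [Set.disjoint_left]
    rintro q ⟨⟨h0, hq1⟩, h1⟩ ⟨-, h2⟩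
    have := h21 q h0 hq1; linarith
  · ext q
    simp only [Set.mem_union, slP3, slP2, slP1, Set.mem_setOf_eq]
    constructor
    · rintro ((⟨h, -⟩ | ⟨h, -⟩) | ⟨h, -⟩) <;> exact h
    · intro hq
      rcases lt_or_ge p (slDelta l1 l2 l3 B12 B22 q) with h | h
      · exact Or.inl (Or.inl ⟨hq, h⟩)
      · rcases lt_or_ge p (slDelta l1 l2 l3 B11 B21 q) with h' | h'
        · exact Or.inl (Or.inr ⟨hq, h, h'⟩)
        · exact Or.inr ⟨hq, h'⟩
  · constructor
    rintro a ⟨⟨ha0, ha1⟩, hpa⟩ b ⟨⟨hb0, hb1⟩, hpb⟩ q ⟨hq1, hq2⟩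
    exact ⟨⟨ha0.trans hq1, hq2.trans hb1⟩,
      lt_of_lt_of_le hpb (anti2 q b (ha0.trans hq1) hb1 hq2)⟩
  · constructor
    rintro a ⟨⟨ha0, ha1⟩, ha2, -⟩ b ⟨⟨hb0, hb1⟩, -, hb3⟩ q ⟨hq1, hq2⟩
    refine ⟨⟨ha0.trans hq1, hq2.trans hb1⟩, ?_, ?_⟩
    · exact le_trans (anti2 a q ha0 (hq2.trans hb1) hq1) ha2
    · exact lt_of_lt_of_le hb3 (anti1 q b (ha0.trans hq1) hb1 hq2)
  · constructor
    rintro a ⟨⟨ha0, ha1⟩, hpa⟩ b ⟨⟨hb0, hb1⟩, hpb⟩ q ⟨hq1, hq2⟩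
    exact ⟨⟨ha0.trans hq1, hq2.trans hb1⟩,
      le_trans (anti1 a q ha0 (hq2.trans hb1) hq1) hpa⟩
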